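/- (Theorem 3.3, relative error bound when the leading exponent cancels.) Let x, y ∈ ℝⁿ with x_i y_i ≠ 0 for every i, set z = x⊙y and E = flexp(xᵀy), and suppose the integer intervals {(ℓ_k, u_k]}_{k=1}^p partition [e_min(z), e_max(z)]. Assume e_max(z) > E and that 2^E ≤ |xᵀy|. Let z̃ be any quantized dot product of x and y with respect to the bins B_k = B_{ℓ_k,u_k}(z) and accuracies ε(1),…,ε(p) > 0. Then |xᵀy − z̃| ≤ |xᵀy| · Σ_{k=1}^p M_k · 2^{u_k − E + 1} · ε(k), where M_k is the cardinality of B_{ℓ_k,u_k}(z). -/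
import Mathlib


/-- `flexp x = ⌊log₂ |x|⌋` if `|x| ≥ 1` and `⌈log₂ |x|⌉` if `|x| < 1`. -/
noncomputable def flexp (x : ℝ) : ℤ :=
  if 1 ≤ |x| then ⌊Real.logb 2 |x|⌋ else ⌈Real.logb 2 |x|⌉

/-- `emax z = max_i flexp (z i)`. -/
noncomputable def emax {n : ℕ} [NeZero n] (z : Fin n → ℝ) : ℤ :=
  Finset.univ.sup' Finset.univ_nonempty (fun i => flexp (z i))

/-- `emin z = min_i flexp (z i)`. -/
noncomputable def emin {n : ℕ} [NeZero n] (z : Fin n → ℝ) : ℤ :=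
  Finset.univ.inf' Finset.univ_nonempty (fun i => flexp (z i))

/-- The `(l,u)`-exponent bin of `z`: indices `i` with `l < flexp (z i) ≤ u`. -/
noncomputable def bin {n : ℕ} (z : Fin n → ℝ) (l u : ℤ) : Finset (Fin n) :=
  Finset.univ.filter (fun i => l < flexp (z i) ∧ flexp (z i) ≤ u)

/-- `zt` is a quantized dot product of `x` and `y` w.r.t. bins `B` and accuracies `ε`. -/
def IsQuantDot {n p : ℕ} (x y : Fin n → ℝ) (B : Fin p → Finset (Fin n))
    (ε : Fin p → ℝ) (zt : ℝ) : Prop :=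
  ∃ δ : Fin n → ℝ, (∀ k : Fin p, ∀ j ∈ B k, |δ j| ≤ ε k) ∧
    zt = ∑ k : Fin p, ∑ j ∈ B k, x j * y j * (1 + δ j)

lemma abs_le_two_zpow_flexp (z : ℝ) (hz : z ≠ 0) : |z| ≤ (2:ℝ) ^ (flexp z + 1) := by
  have ha : 0 < |z| := abs_pos.mpr hz
  have hlog : Real.logb 2 |z| ≤ ((flexp z + 1 : ℤ) : ℝ) := by
    unfold flexp
    split_ifs with h
    · push_cast
      have := Int.lt_floor_add_one (Real.logb 2 |z|)
      linarith
    · push_cast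
      have := Int.le_ceil (Real.logb 2 |z|)
      linarith
  calc |z| = (2:ℝ) ^ (Real.logb 2 |z|) := (Real.rpow_logb (by norm_num) (by norm_num) ha).symm
    _ ≤ (2:ℝ) ^ (((flexp z + 1 : ℤ) : ℝ)) :=
        Real.rpow_le_rpow_of_exponent_le (by norm_num) hlog
    _ = (2:ℝ) ^ (flexp z + 1) := Real.rpow_intCast 2 _

theorem stmt6 {n p : ℕ} [NeZero n] (x y : Fin n → ℝ)
    (hxy : ∀ i, x i * y i ≠ 0)
    (l u : Fin p → ℤ)
    (hpart : ∀ e : ℤ, emin (fun i => x i * y i) ≤ e → e ≤ emax (fun i => x i * y i) →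
      ∃! k : Fin p, l k < e ∧ e ≤ u k)
    (hE : flexp (∑ i : Fin n, x i * y i) < emax (fun i => x i * y i))
    (h2E : (2 : ℝ) ^ (flexp (∑ i : Fin n, x i * y i)) ≤ |∑ i : Fin n, x i * y i|)
    (ε : Fin p → ℝ) (hε : ∀ k, 0 < ε k) (zt : ℝ)
    (hzt : IsQuantDot x y (fun k => bin (fun i => x i * y i) (l k) (u k)) ε zt) :
    |(∑ i : Fin n, x i * y i) - zt| ≤
      |∑ i : Fin n, x i * y i| *
        ∑ k : Fin p,
          ((bin (fun i => x i * y i) (l k) (u k)).card : ℝ) *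
            (2 : ℝ) ^ (u k - flexp (∑ i : Fin n, x i * y i) + 1) * ε k := by
  classical
  set z : Fin n → ℝ := fun i => x i * y i with hzdef
  set S : ℝ := ∑ i : Fin n, x i * y i with hSdef
  set E : ℤ := flexp S with hEdef
  obtain ⟨δ, hδ, hzteq⟩ := hzt
  have hcover : ∀ f : Fin n → ℝ,
      ∑ k : Fin p, ∑ j ∈ bin z (l k) (u k), f j = ∑ j : Fin n, f j := by
    intro f
    have hrw : ∀ k : Fin p, ∑ j ∈ bin z (l k) (u k), f j
        = ∑ j : Fin n, if l k < flexp (z j) ∧ flexp (z j) ≤ u k then f j else 0 := by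
      intro k; rw [bin, Finset.sum_filter]
    simp_rw [hrw]
    rw [Finset.sum_comm]
    refine Finset.sum_congr rfl (fun j _ => ?_)
    have hmin : emin z ≤ flexp (z j) :=
      Finset.inf'_le (fun i => flexp (z i)) (Finset.mem_univ j)
    have hmax : flexp (z j) ≤ emax z :=
      Finset.le_sup' (fun i => flexp (z i)) (Finset.mem_univ j)
    obtain ⟨k0, hk0, huniq⟩ := hpart (flexp (z j)) hmin hmax
    rw [Finset.sum_eq_single k0]
    · simp [hk0]
    · intro k _ hk
      rw [if_neg]
      intro h
      exact hk (huniq k h)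
    · simp
  have hdiff : S - zt = ∑ k : Fin p, ∑ j ∈ bin z (l k) (u k), (-(z j * δ j)) := by
    rw [hzteq]
    conv_lhs => rw [hSdef]
    rw [← hcover z]
    rw [← Finset.sum_sub_distrib]
    refine Finset.sum_congr rfl (fun k _ => ?_)
    rw [← Finset.sum_sub_distrib]
    refine Finset.sum_congr rfl (fun j _ => ?_)
    simp only [hzdef]
    ring
  have hSpos : (0:ℝ) < |S| := lt_of_lt_of_le (by positivity) h2E
  have hbound : ∀ k : Fin p, ∀ j ∈ bin z (l k) (u k),
      |(-(z j * δ j))| ≤ (2:ℝ) ^ (u k + 1) * ε k := by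
    intro k j hj
    simp only [bin, Finset.mem_filter] at hj
    have h1 : |z j| ≤ (2:ℝ) ^ (flexp (z j) + 1) := abs_le_two_zpow_flexp _ (hxy j)
    have h2 : (2:ℝ) ^ (flexp (z j) + 1) ≤ (2:ℝ) ^ (u k + 1) := by
      apply zpow_le_zpow_right₀ (by norm_num)
      omega
    have h3 : |δ j| ≤ ε k := hδ k j (by simp only [bin, Finset.mem_filter]; exact ⟨Finset.mem_univ j, hj.2⟩)
    rw [abs_neg, abs_mul]
    exact mul_le_mul (h1.trans h2) h3 (abs_nonneg _) (by positivity)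
  calc |S - zt| = |∑ k : Fin p, ∑ j ∈ bin z (l k) (u k), (-(z j * δ j))| := by rw [hdiff]
    _ ≤ ∑ k : Fin p, |∑ j ∈ bin z (l k) (u k), (-(z j * δ j))| := Finset.abs_sum_le_sum_abs _ _
    _ ≤ ∑ k : Fin p, ∑ j ∈ bin z (l k) (u k), |(-(z j * δ j))| :=
        Finset.sum_le_sum (fun k _ => Finset.abs_sum_le_sum_abs _ _)
    _ ≤ ∑ k : Fin p, ((bin z (l k) (u k)).card : ℝ) * ((2:ℝ) ^ (u k + 1) * ε k) := by
        refine Finset.sum_le_sum (fun k _ => ?_)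
        have := Finset.sum_le_card_nsmul (bin z (l k) (u k)) (fun j => |(-(z j * δ j))|)
          ((2:ℝ) ^ (u k + 1) * ε k) (hbound k)
        simpa [nsmul_eq_mul] using this
    _ ≤ ∑ k : Fin p, |S| * (((bin z (l k) (u k)).card : ℝ) * (2:ℝ) ^ (u k - E + 1) * ε k) := by
        refine Finset.sum_le_sum (fun k _ => ?_)
        have h4 : (2:ℝ) ^ (u k + 1) ≤ |S| * (2:ℝ) ^ (u k - E + 1) := by
          have : (2:ℝ) ^ (u k + 1) = (2:ℝ) ^ E * (2:ℝ) ^ (u k - E + 1) := by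
            rw [← zpow_add₀ (by norm_num : (2:ℝ) ≠ 0)]
            ring_nf
          rw [this]
          exact mul_le_mul_of_nonneg_right h2E (by positivity)
        calc ((bin z (l k) (u k)).card : ℝ) * ((2:ℝ) ^ (u k + 1) * ε k)
            ≤ ((bin z (l k) (u k)).card : ℝ) * ((|S| * (2:ℝ) ^ (u k - E + 1)) * ε k) := by
              apply mul_le_mul_of_nonneg_left _ (by positivity)
              exact mul_le_mul_of_nonneg_right h4 (hε k).le
          _ = |S| * (((bin z (l k) (u k)).card : ℝ) * (2:ℝ) ^ (u k - E + 1) * ε k) := by ring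
    _ = |S| * ∑ k : Fin p, ((bin z (l k) (u k)).card : ℝ) * (2:ℝ) ^ (u k - E + 1) * ε k := by
        rw [Finset.mul_sum]
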